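/- Let G be the group ⟨a, b | a b a b^{-1} a^{-1} b a b = b a b a^{-1} b^{-1} a b a, (b a b^{-1} a^{-1} b^{-1} a b a^{-1})^n a^m = 1⟩ with integers m, n satisfying m ≥ 2n ≥ 2. Then U U^{a^2} U^{a^4} ⋯ U^{a^{2(n-1)}} a^{m-2n} = 1 in G, where U = a^{b^{-1} a^{-1}} a^b. -/
import Mathlib


/-- The two relators of
⟨a, b | a b a b⁻¹ a⁻¹ b a b = b a b a⁻¹ b⁻¹ a b a, (b a b⁻¹ a⁻¹ b⁻¹ a b a⁻¹)ⁿ aᵐ = 1⟩,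
with `a = FreeGroup.of 0`, `b = FreeGroup.of 1`. -/
def whiteheadRels (m n : ℕ) : Set (FreeGroup (Fin 2)) :=
  let a : FreeGroup (Fin 2) := FreeGroup.of 0
  let b : FreeGroup (Fin 2) := FreeGroup.of 1
  { (a * b * a * b⁻¹ * a⁻¹ * b * a * b) * (b * a * b * a⁻¹ * b⁻¹ * a * b * a)⁻¹,
    (b * a * b⁻¹ * a⁻¹ * b⁻¹ * a * b * a⁻¹) ^ n * a ^ m }

/-- In G = ⟨a, b | a b a b⁻¹ a⁻¹ b a b = b a b a⁻¹ b⁻¹ a b a,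
(b a b⁻¹ a⁻¹ b⁻¹ a b a⁻¹)ⁿ aᵐ = 1⟩ with m ≥ 2n ≥ 2, we have
U U^{a²} U^{a⁴} ⋯ U^{a^{2(n-1)}} a^{m-2n} = 1, where U = a^{b⁻¹a⁻¹} a^{b}. -/
theorem whitehead_filling_relation (m n : ℕ) (hn : 1 ≤ n) (hm : 2 * n ≤ m) :
    let a : PresentedGroup (whiteheadRels m n) := PresentedGroup.of 0
    let b : PresentedGroup (whiteheadRels m n) := PresentedGroup.of 1
    let U := ((b⁻¹ * a⁻¹)⁻¹ * a * (b⁻¹ * a⁻¹)) * (b⁻¹ * a * b)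
    ((List.range n).map (fun i => (a ^ (2 * i))⁻¹ * U * a ^ (2 * i))).prod *
      a ^ (m - 2 * n) = 1 := by
  intro a b U
  set w : PresentedGroup (whiteheadRels m n) := b * a * b⁻¹ * a⁻¹ * b⁻¹ * a * b * a⁻¹ with hw
  -- the second relator holds in the presented group
  have hrel : w ^ n * a ^ m = 1 := by
    have hmem : ((FreeGroup.of 1 * FreeGroup.of 0 * (FreeGroup.of 1)⁻¹ * (FreeGroup.of 0)⁻¹ *
        (FreeGroup.of 1)⁻¹ * FreeGroup.of 0 * FreeGroup.of 1 * (FreeGroup.of 0)⁻¹) ^ n *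
        (FreeGroup.of 0 : FreeGroup (Fin 2)) ^ m) ∈ whiteheadRels m n := by
      simp [whiteheadRels]
    have h1 := (QuotientGroup.eq_one_iff (G := FreeGroup (Fin 2))
        (N := Subgroup.normalClosure (whiteheadRels m n)) _).mpr
        (Subgroup.subset_normalClosure hmem)
    have ha : a = (QuotientGroup.mk' (Subgroup.normalClosure (whiteheadRels m n)))
        (FreeGroup.of 0) := rfl
    have hb : b = (QuotientGroup.mk' (Subgroup.normalClosure (whiteheadRels m n)))
        (FreeGroup.of 1) := rfl
    have h1' : (QuotientGroup.mk' (Subgroup.normalClosure (whiteheadRels m n)))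
        ((FreeGroup.of 1 * FreeGroup.of 0 * (FreeGroup.of 1)⁻¹ * (FreeGroup.of 0)⁻¹ *
          (FreeGroup.of 1)⁻¹ * FreeGroup.of 0 * FreeGroup.of 1 * (FreeGroup.of 0)⁻¹) ^ n *
          (FreeGroup.of 0 : FreeGroup (Fin 2)) ^ m) = 1 := h1
    simp only [map_mul, map_inv, map_pow] at h1'
    rw [hw, ha, hb]
    exact h1'
  have hU : U = a * w * a := by
    show ((b⁻¹ * a⁻¹)⁻¹ * a * (b⁻¹ * a⁻¹)) * (b⁻¹ * a * b) = a * w * a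
    rw [hw]; group
  have key : ∀ k : ℕ,
      ((List.range k).map (fun i => (a ^ (2 * i))⁻¹ * U * a ^ (2 * i))).prod
        = a * w ^ k * a ^ (2 * k) * a⁻¹ := by
    intro k
    induction k with
    | zero => simp
    | succ k ih =>
      rw [List.range_succ, List.map_append, List.prod_append, ih]
      simp only [List.map_cons, List.map_nil, List.prod_cons, List.prod_nil, mul_one]
      rw [hU, pow_succ w, Nat.mul_succ, pow_add]
      group
  rw [key n]
  have hpow : a ^ (2 * n) * a ^ (m - 2 * n) = a ^ m := by
    rw [← pow_add]; congr 1; omega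
  have hc : a⁻¹ * a ^ (m - 2 * n) = a ^ (m - 2 * n) * a⁻¹ :=
    (((Commute.refl a).pow_right (m - 2 * n)).inv_left).eq
  calc a * w ^ n * a ^ (2 * n) * a⁻¹ * a ^ (m - 2 * n)
      = a * w ^ n * (a ^ (2 * n) * (a⁻¹ * a ^ (m - 2 * n))) := by
        simp only [mul_assoc]
    _ = a * w ^ n * (a ^ (2 * n) * a ^ (m - 2 * n)) * a⁻¹ := by
        rw [hc]; simp only [mul_assoc]
    _ = a * (w ^ n * a ^ m) * a⁻¹ := by rw [hpow]; simp only [mul_assoc]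
    _ = 1 := by rw [hrel]; group
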